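/- arXiv:math/0602456 — 2 statements merged into one kernel-verified Lean document; each statement's English description precedes it below -/
import Mathlib

section
/- Every bad normalized fully ternary string s of length n has flip grouping distance d_g(s) = n − 2. -/
/-- Prefix reversal (flip) of the first `i` symbols of `s`. -/
def pflip (i : ℕ) (s : List ℕ) : List ℕ := (s.take i).reverse ++ s.drop i

/-- One flip step: `t` is obtained from `s` by some flip `f^(i)` with `1 ≤ i ≤ |s|`. -/
def FlipStep (s t : List ℕ) : Prop := ∃ i, 1 ≤ i ∧ i ≤ s.length ∧ t = pflip i s

/-- `ReachIn m s t`: `t` can be obtained from `s` by exactly `m` flips. -/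
def ReachIn : ℕ → List ℕ → List ℕ → Prop
  | 0 => fun s t => s = t
  | (m+1) => fun s t => ∃ u, FlipStep s u ∧ ReachIn m u t

/-- Flip distance: minimum number of flips transforming `s` into `t`. -/
noncomputable def flipDist (s t : List ℕ) : ℕ := sInf {m | ReachIn m s t}

/-- Two strings are compatible if every symbol occurs equally often in both. -/
def Compatible (s t : List ℕ) : Prop := ∀ a, s.count a = t.count a

/-- A string is fully `k`-ary if the set of symbols occurring in it is exactly `{0,…,k-1}`. -/
def FullyKary (k : ℕ) (s : List ℕ) : Prop := ∀ a, a ∈ s ↔ a < k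

/-- A string is normalized if no two adjacent symbols are equal. -/
def Normalized (s : List ℕ) : Prop := s.Chain' (· ≠ ·)

/-- A string is grouped if the occurrences of each symbol are consecutive. -/
def Grouped (s : List ℕ) : Prop :=
  ∀ i j l : Fin s.length, i < j → j < l → s.get i = s.get l → s.get j = s.get i

/-- Flip grouping distance: minimum number of flips transforming `s` into some grouped string. -/
noncomputable def groupDist (s : List ℕ) : ℕ := sInf {m | ∃ t, Grouped t ∧ ReachIn m s t}

/-- Flip sorting distance: flip distance from `s` to its non-descending rearrangement `I(s)`. -/
noncomputable def sortDist (s : List ℕ) : ℕ := flipDist s (s.insertionSort (· ≤ ·))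

/-- `rep w m` is the concatenation of `m` copies of the string `w`. -/
def rep (w : List ℕ) (m : ℕ) : List ℕ := (List.replicate m w).flatten

/-- Generic base forms (types I--IV) of bad ternary strings, before relabeling. -/
def GBaseForm (s : List ℕ) : Prop :=
  -- type I: 0(12)^{≥2} and 02(12)^+
  (∃ j, 2 ≤ j ∧ s = 0 :: rep [1,2] j) ∨
  (∃ j, 1 ≤ j ∧ s = 0 :: 2 :: rep [1,2] j) ∨
  -- type II: ({0,1}2)^+ and (2{0,1})^+2
  (∃ xs : List ℕ, xs ≠ [] ∧ (∀ x ∈ xs, x = 0 ∨ x = 1) ∧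
    s = (xs.map (fun x => [x,2])).flatten) ∨
  (∃ xs : List ℕ, xs ≠ [] ∧ (∀ x ∈ xs, x = 0 ∨ x = 1) ∧
    s = (xs.map (fun x => [2,x])).flatten ++ [2]) ∨
  -- type III: 0(21)^+02(12)^*
  (∃ i j, 1 ≤ i ∧ s = 0 :: (rep [2,1] i ++ 0 :: 2 :: rep [1,2] j)) ∨
  -- type IV: eight exceptional strings
  s = [2,1,0,2,1,2] ∨ s = [0,2,1,0,1,2] ∨ s = [0,1,2,0,2,1,2] ∨ s = [1,2,0,1,2,1,2] ∨
  s = [0,2,1,0,1,2,1,2] ∨ s = [2,0,2,1,0,2,1,2] ∨ s = [0,2,0,2,1,0,2,1,2] ∨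
  s = [1,2,0,1,2,0,2,1,2]

/-- A normalized fully ternary string is bad if some bijective relabeling of `{0,1,2}`
turns it into one of the base forms. -/
def BadTernary (s : List ℕ) : Prop :=
  ∃ f : ℕ → ℕ, Set.BijOn f {x | x < 3} {x | x < 3} ∧ GBaseForm (s.map f)

/-!
Write `b(s)` for the number of blocks (maximal runs of equal symbols) of `s`, that is, the length
of its block word `s.destutter (· ≠ ·)`; a normalized string of length `n` has `b(s) = n`.

Upper bound: every string can be grouped greedily with `b(s) - 2` flips. If the first symbol `a`
occurs again after its leading block, flipping the prefix that ends just before that occurrence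
merges two `a`-blocks; otherwise reverse the whole string and group the rest in front of the
now trailing `a`-block.

Lower bound: a flip lowers `b` by at most one, and when it does, the block word undergoes a merge
flip `aXaY ↦ Xᴿ a Y`. Bad words are closed under merge flips, checked form by form (no string of
type I admits one). A bad word of length at least three repeats a symbol, whereas the block word
of a grouped string does not, and a grouped ternary string has at most three blocks. Induction on
the number of flips then shows that grouping `s` takes at least `b(s) - 2` flips.
-/

open List

namespace List

variable {α : Type*}

theorem head?_destutter' (R : α → α → Prop) [DecidableRel R] (a : α) (l : List α) :
    (l.destutter' R a).head? = some a := by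
  induction l with
  | nil => rfl
  | cons b l ih => rw [destutter'_cons]; split <;> simp [ih]

theorem head?_destutter (R : α → α → Prop) [DecidableRel R] (l : List α) :
    (l.destutter R).head? = l.head? := by
  cases l with
  | nil => rfl
  | cons a l => exact head?_destutter' R a l

theorem exists_cons_eq_replicate_append (a : α) (l : List α) :
    ∃ k v, a :: l = replicate (k + 1) a ++ v ∧ v.head? ≠ some a := by
  induction l with
  | nil => exact ⟨0, [], rfl, by simp⟩
  | cons b l ih =>
    by_cases hb : b = a
    · obtain ⟨k, v, h, hv⟩ := ih
      exact ⟨k + 1, v, by rw [hb, h]; rfl, hv⟩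
    · exact ⟨0, b :: l, rfl, by simpa using hb⟩

theorem nodup_of_isChain_ne {l : List α} (hc : l.IsChain (· ≠ ·))
    (h : ∀ v w, [v, w, v] <+ l → w = v) : l.Nodup := by
  induction l with
  | nil => exact nodup_nil
  | cons a t ih =>
    refine nodup_cons.2 ⟨fun hat => ?_, ih hc.tail fun v w hs => h v w (hs.cons a)⟩
    obtain ⟨b, t', rfl⟩ := exists_cons_of_ne_nil (ne_nil_of_mem hat)
    have hab : a ≠ b := (isChain_cons_cons.1 hc).1
    have hat' : a ∈ t' := (mem_cons.1 hat).resolve_left hab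
    exact hab (h a b (((singleton_sublist.2 hat').cons_cons b).cons_cons a)).symm

variable [DecidableEq α]

theorem destutter'_ne_append (a : α) (l₁ l₂ : List α) :
    (l₁ ++ l₂).destutter' (· ≠ ·) a = l₁.destutter' (· ≠ ·) a ++
      if (a :: l₁).getLast? = l₂.head? then (l₂.destutter (· ≠ ·)).tail
      else l₂.destutter (· ≠ ·) := by
  induction l₁ generalizing a with
  | nil =>
    cases l₂ with
    | nil => simp
    | cons b l₂ =>
      by_cases hab : a = b
      · subst hab
        obtain ⟨t, ht⟩ := head?_eq_some_iff.1 (head?_destutter' (· ≠ ·) a l₂)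
        simp [destutter_cons', ht]
      · simp [hab, destutter_cons']
  | cons c l₁ ih =>
    by_cases hac : a = c
    · subst hac
      simpa [destutter'_cons] using ih a
    · simp [hac, ih c]

theorem destutter_ne_append (l₁ l₂ : List α) :
    (l₁ ++ l₂).destutter (· ≠ ·) = l₁.destutter (· ≠ ·) ++
      if l₁.getLast? = l₂.head? then (l₂.destutter (· ≠ ·)).tail
      else l₂.destutter (· ≠ ·) := by
  cases l₁ with
  | nil => cases l₂ <;> simp
  | cons a l₁ => exact destutter'_ne_append a l₁ l₂

theorem destutter_ne_cons (a : α) (l : List α) :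
    (a :: l).destutter (· ≠ ·) =
      if l.head? = some a then l.destutter (· ≠ ·) else a :: l.destutter (· ≠ ·) := by
  have h₀ := destutter_ne_append [a] l
  rw [singleton_append] at h₀
  rw [h₀]
  by_cases h : l.head? = some a
  · obtain ⟨t, ht⟩ := head?_eq_some_iff.1 ((head?_destutter (· ≠ ·) l).trans h)
    simp [h, ht]
  · simp [h, Ne.symm h]

theorem destutter_ne_reverse (l : List α) :
    l.reverse.destutter (· ≠ ·) = (l.destutter (· ≠ ·)).reverse := by
  induction l with
  | nil => rfl
  | cons a l ih =>
    rw [reverse_cons, destutter_ne_append, ih, destutter_ne_cons a l, getLast?_reverse]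
    by_cases h : l.head? = some a <;> simp [h]

theorem destutter_ne_reverse_append (l₁ l₂ : List α) :
    (l₁.reverse ++ l₂).destutter (· ≠ ·) = (l₁.destutter (· ≠ ·)).reverse ++
      if l₁.head? = l₂.head? then (l₂.destutter (· ≠ ·)).tail else l₂.destutter (· ≠ ·) := by
  rw [destutter_ne_append, destutter_ne_reverse, getLast?_reverse]

theorem mem_destutter_ne {a : α} {l : List α} : a ∈ l.destutter (· ≠ ·) ↔ a ∈ l := by
  refine ⟨fun h => (destutter_sublist _ l).subset h, fun h => ?_⟩
  induction l with
  | nil => simp at h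
  | cons b l ih =>
    rw [destutter_ne_cons]
    rcases mem_cons.1 h with rfl | h
    · split_ifs with hb
      · exact mem_of_mem_head? ((head?_destutter _ l).trans hb)
      · exact mem_cons_self
    · split_ifs <;> simp [ih h]

theorem destutter_ne_replicate_succ (k : ℕ) (a : α) :
    (replicate (k + 1) a).destutter (· ≠ ·) = [a] := by
  induction k with
  | zero => rfl
  | succ k ih => rw [replicate_succ, destutter_ne_cons, if_pos (by simp [head?_replicate]), ih]

theorem two_le_length_destutter_ne {l : List α} {a b : α} (ha : a ∈ l) (hb : b ∈ l)
    (hab : a ≠ b) : 2 ≤ (l.destutter (· ≠ ·)).length := by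
  rw [← mem_destutter_ne] at ha hb
  rcases h : l.destutter (· ≠ ·) with _ | ⟨c, _ | ⟨d, t⟩⟩ <;> simp_all

theorem length_destutter_ne_reverse_append_add_one {l₁ l₂ : List α}
    (hhead : l₁.head? = l₂.head?) (hlast : l₁.getLast? ≠ l₂.head?) :
    ((l₁.reverse ++ l₂).destutter (· ≠ ·)).length + 1 =
      ((l₁ ++ l₂).destutter (· ≠ ·)).length := by
  have hl₂ : l₂.destutter (· ≠ ·) ≠ [] := by
    rw [ne_eq, destutter_eq_nil]
    rintro rfl
    cases l₁ <;> simp_all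
  rw [destutter_ne_reverse_append, destutter_ne_append, if_pos hhead, if_neg hlast]
  have := length_pos_of_ne_nil hl₂
  simp only [length_append, length_reverse, length_tail]
  omega

end List

theorem grouped_iff_forall_sublist {s : List ℕ} :
    Grouped s ↔ ∀ v w, [v, w, v] <+ s → w = v := by
  constructor
  · intro hg v w h
    obtain ⟨is, his, hlt⟩ := sublist_eq_map_getElem h
    rcases is with _ | ⟨i, _ | ⟨j, _ | ⟨l, _ | _⟩⟩⟩ <;> simp at his
    obtain ⟨rfl, rfl, hl⟩ := his
    simp only [pairwise_cons, mem_cons, forall_eq_or_imp] at hlt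
    exact hg i j l hlt.1.1 hlt.2.1.1 hl
  · intro h i j l hij hjl hil
    have hsub := map_getElem_sublist (l := s) (is := [i, j, l])
      (by simp only [pairwise_cons, mem_cons, forall_eq_or_imp]; grind)
    simp only [get_eq_getElem] at hil
    exact h _ _ (by simpa [hil] using hsub)

theorem grouped_of_forall_eq {g : List ℕ} (hg : ∀ x ∈ g, ∀ y ∈ g, x = y) : Grouped g :=
  grouped_iff_forall_sublist.2 fun _ _ h => hg _ (h.subset (by simp)) _ (h.subset (by simp))

theorem Grouped.append {g v : List ℕ} (hg : Grouped g) (hv : ∀ x ∈ v, ∀ y ∈ v, x = y)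
    (hgv : ∀ x ∈ v, x ∉ g) : Grouped (g ++ v) := by
  rw [grouped_iff_forall_sublist] at hg ⊢
  intro a b h
  obtain ⟨l₁, l₂, hl, h₁, h₂⟩ := sublist_append_iff.1 h
  rcases eq_or_ne l₂ [] with rfl | hl₂
  · exact hg a b (by simpa [hl] using h₁)
  rcases eq_or_ne l₁ [] with rfl | hl₁
  · rw [nil_append] at hl
    subst hl
    exact hv _ (h₂.subset (by simp)) _ (h₂.subset (by simp))
  have ha₁ : a ∈ l₁ := by
    obtain ⟨c, t, rfl⟩ := exists_cons_of_ne_nil hl₁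
    simp_all
  have ha₂ : a ∈ l₂ := by
    have := congrArg getLast? hl
    rw [getLast?_append, getLast?_eq_some_getLast hl₂] at this
    simp only [getLast?_cons_cons, getLast?_singleton, Option.some_or, Option.some.injEq] at this
    exact this ▸ getLast_mem hl₂
  exact absurd (h₁.subset ha₁) (hgv a (h₂.subset ha₂))

theorem Grouped.nodup_destutter {g : List ℕ} (hg : Grouped g) : (g.destutter (· ≠ ·)).Nodup :=
  nodup_of_isChain_ne (isChain_destutter _ g) fun v w h =>
    grouped_iff_forall_sublist.1 hg v w (h.trans (destutter_sublist _ g))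

theorem Grouped.length_destutter_le {g : List ℕ} (hg : Grouped g) {k : ℕ}
    (hk : ∀ x ∈ g, x < k) : (g.destutter (· ≠ ·)).length ≤ k := by
  rw [← toFinset_card_of_nodup hg.nodup_destutter, ← Finset.card_range k]
  exact Finset.card_le_card fun x hx => by
    simpa using hk x (mem_destutter_ne.1 (mem_toFinset.1 hx))

theorem flipStep_iff {s u : List ℕ} :
    FlipStep s u ↔ ∃ x y, x ≠ [] ∧ s = x ++ y ∧ u = x.reverse ++ y := by
  constructor
  · rintro ⟨i, hi, his, rfl⟩
    refine ⟨s.take i, s.drop i, fun h => ?_, (take_append_drop i s).symm, rfl⟩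
    rcases take_eq_nil_iff.1 h with rfl | rfl <;> simp at hi his; omega
  · rintro ⟨x, y, hx, rfl, rfl⟩
    exact ⟨x.length, length_pos_of_ne_nil hx, by simp, by simp [pflip]⟩

theorem FlipStep.perm {s u : List ℕ} (h : FlipStep s u) : s.Perm u := by
  obtain ⟨x, y, -, rfl, rfl⟩ := flipStep_iff.1 h
  exact (reverse_perm x).symm.append_right y

theorem ReachIn.perm {m : ℕ} {s t : List ℕ} (h : ReachIn m s t) : s.Perm t := by
  induction m generalizing s with
  | zero => rw [h]
  | succ m ih =>
    obtain ⟨u, hu, hr⟩ := h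
    exact hu.perm.trans (ih hr)

theorem ReachIn.append_right {m : ℕ} {s t : List ℕ} (h : ReachIn m s t) (w : List ℕ) :
    ReachIn m (s ++ w) (t ++ w) := by
  induction m generalizing s with
  | zero => rw [h]; rfl
  | succ m ih =>
    obtain ⟨u, hu, hr⟩ := h
    obtain ⟨x, y, hx, rfl, rfl⟩ := flipStep_iff.1 hu
    exact ⟨_, flipStep_iff.2 ⟨x, y ++ w, hx, by simp, by simp⟩, ih hr⟩

theorem length_destutter_le_of_flipStep {s u : List ℕ} (h : FlipStep s u) :
    (s.destutter (· ≠ ·)).length ≤ (u.destutter (· ≠ ·)).length + 1 := by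
  obtain ⟨x, y, -, rfl, rfl⟩ := flipStep_iff.1 h
  rw [destutter_ne_append, destutter_ne_reverse_append]
  split_ifs <;> simp <;> omega

theorem length_destutter_le_of_reachIn {m : ℕ} {s t : List ℕ} (h : ReachIn m s t) :
    (s.destutter (· ≠ ·)).length ≤ m + (t.destutter (· ≠ ·)).length := by
  induction m generalizing s with
  | zero => rw [h]; omega
  | succ m ih =>
    obtain ⟨u, hu, hr⟩ := h
    have := length_destutter_le_of_flipStep hu
    have := ih hr
    omega

theorem exists_flipStep_merge {a k : ℕ} {v : List ℕ} (hv : v.head? ≠ some a) (hav : a ∈ v) :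
    ∃ u, FlipStep (replicate (k + 1) a ++ v) u ∧
      (u.destutter (· ≠ ·)).length + 1 = ((replicate (k + 1) a ++ v).destutter (· ≠ ·)).length ∧
      2 ≤ (u.destutter (· ≠ ·)).length := by
  obtain ⟨w₁, w₂, rfl, haw₁⟩ := eq_append_cons_of_mem hav
  have hw₁ : w₁ ≠ [] := by rintro rfl; simp at hv
  set x := replicate (k + 1) a ++ w₁ with hx
  have hhead : x.head? = some a := by simp [x, head?_replicate]
  have hlast : x.getLast? ≠ some a := by
    rw [hx, getLast?_append, getLast?_eq_some_getLast hw₁]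
    exact fun h => haw₁ (Option.some.inj h ▸ getLast_mem hw₁)
  rw [← append_assoc, ← hx]
  refine ⟨x.reverse ++ a :: w₂, flipStep_iff.2 ⟨x, a :: w₂, by simp [x], rfl, rfl⟩,
    length_destutter_ne_reverse_append_add_one hhead hlast, ?_⟩
  exact two_le_length_destutter_ne (a := a) (b := w₁.head hw₁) (by simp)
    (by simp [x, head_mem hw₁]) fun h => haw₁ (h ▸ head_mem hw₁)

theorem exists_reachIn_grouped (s : List ℕ) :
    ∃ m t, ReachIn m s t ∧ Grouped t ∧ m ≤ (s.destutter (· ≠ ·)).length - 2 := by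
  induction hN : (s.destutter (· ≠ ·)).length using Nat.strong_induction_on generalizing s with
  | _ N ih =>
  subst hN
  rcases s with _ | ⟨a, l⟩
  · exact ⟨0, [], rfl, grouped_of_forall_eq (by simp), Nat.zero_le _⟩
  obtain ⟨k, v, hs, hv⟩ := exists_cons_eq_replicate_append a l
  rw [hs] at ih ⊢
  by_cases hav : a ∈ v
  · obtain ⟨u, hsu, hmerge, h2⟩ := exists_flipStep_merge (k := k) hv hav
    obtain ⟨m, t, hu, ht, hm⟩ := ih _ (by omega) u rfl
    exact ⟨m + 1, t, ⟨u, hsu, hu⟩, ht, by omega⟩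
  by_cases hconst : ∀ x ∈ v, ∀ y ∈ v, x = y
  · refine ⟨0, _, rfl, (grouped_of_forall_eq ?_).append hconst ?_, Nat.zero_le _⟩
    · simp +contextual
    · exact fun x hx hxa => hav (eq_of_mem_replicate hxa ▸ hx)
  push Not at hconst
  obtain ⟨x, hx, y, hy, hxy⟩ := hconst
  have h2 := two_le_length_destutter_ne (mem_reverse.2 hx) (mem_reverse.2 hy) hxy
  have hlen : ((replicate (k + 1) a ++ v).destutter (· ≠ ·)).length =
      (v.reverse.destutter (· ≠ ·)).length + 1 := by
    rw [destutter_ne_append, getLast?_replicate, if_neg (by simpa using hv.symm),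
      destutter_ne_replicate_succ, destutter_ne_reverse]
    simp only [singleton_append, length_cons, length_reverse]
  obtain ⟨m, t, hvt, ht, hm⟩ := ih _ (by omega) v.reverse rfl
  have hflip : FlipStep (replicate (k + 1) a ++ v) (v.reverse ++ replicate (k + 1) a) :=
    flipStep_iff.2 ⟨replicate (k + 1) a ++ v, [], by simp, by simp, by simp⟩
  refine ⟨m + 1, t ++ replicate (k + 1) a, ⟨_, hflip, hvt.append_right _⟩,
    ht.append (by simp +contextual) ?_, ?_⟩
  · exact fun x hx hxt => hav (by simpa [eq_of_mem_replicate hx] using hvt.perm.mem_iff.2 hxt)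
  · omega

/-- The effect on block words of a flip that merges two blocks: the prefix `aX` of `aXaY` is
reversed and the two copies of `a` fuse. -/
def MergeFlip {α : Type*} (B B' : List α) : Prop :=
  ∃ a X Y, B = a :: (X ++ a :: Y) ∧ B' = X.reverse ++ a :: Y

theorem FlipStep.mergeFlip_destutter {s u : List ℕ} (h : FlipStep s u)
    (hlt : (u.destutter (· ≠ ·)).length < (s.destutter (· ≠ ·)).length) :
    MergeFlip (s.destutter (· ≠ ·)) (u.destutter (· ≠ ·)) := by
  obtain ⟨x, y, -, rfl, rfl⟩ := flipStep_iff.1 h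
  rw [destutter_ne_reverse_append, destutter_ne_append] at hlt ⊢
  split_ifs at hlt ⊢ with hlast hhead hhead <;>
    simp only [length_append, length_reverse, length_tail] at hlt <;> try omega
  obtain ⟨a, Y, hY⟩ := exists_cons_of_ne_nil
    (ne_nil_of_length_pos (l := y.destutter (· ≠ ·)) (by omega))
  obtain ⟨X, hX⟩ : ∃ X, x.destutter (· ≠ ·) = a :: X := by
    rw [← head?_eq_some_iff, head?_destutter, hhead, ← head?_destutter (· ≠ ·), hY, head?_cons]
  exact ⟨a, X, Y, by rw [hX, hY, cons_append], by simp [hX, hY]⟩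

theorem MergeFlip.map {α β : Type*} (f : α → β) {B B' : List α} (h : MergeFlip B B') :
    MergeFlip (B.map f) (B'.map f) := by
  obtain ⟨a, X, Y, rfl, rfl⟩ := h
  exact ⟨f a, X.map f, Y.map f, by simp, by simp⟩

theorem not_mergeFlip_cons {α : Type*} {a : α} {l B' : List α} (ha : a ∉ l) :
    ¬ MergeFlip (a :: l) B' := by
  rintro ⟨b, X, Y, hB, -⟩
  obtain ⟨rfl, rfl⟩ := cons.inj hB
  exact ha mem_append_cons_self

theorem MergeFlip.exists_take_drop {α : Type*} {B B' : List α} (h : MergeFlip B B') :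
    ∃ k < B.length, 0 < k ∧ B[k]? = B.head? ∧ B' = (B.take k).reverse ++ B.drop (k + 1) := by
  obtain ⟨a, X, Y, rfl, rfl⟩ := h
  exact ⟨X.length + 1, by simp, by omega, by simp, by simp [drop_append]⟩

def pairWith {α : Type*} (c : α) (xs : List α) : List α := xs.flatMap fun x => [x, c]

section pairWith

variable {α : Type*} {c : α}

@[simp] theorem pairWith_nil : pairWith c [] = [] := rfl

@[simp] theorem pairWith_cons (x : α) (xs : List α) :
    pairWith c (x :: xs) = x :: c :: pairWith c xs := rfl

theorem flatten_map_cons_pair_append (xs : List α) :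
    (xs.map fun x => [c, x]).flatten ++ [c] = c :: pairWith c xs := by
  induction xs with
  | nil => rfl
  | cons x xs ih => simp [ih]

theorem reverse_pairWith_append_cons (p q : List α) :
    (pairWith c p).reverse ++ c :: pairWith c q = c :: pairWith c (p.reverse ++ q) := by
  induction p generalizing q with
  | nil => rfl
  | cons x p ih => simpa using ih (x :: q)

theorem pairWith_eq_append_cons {a : α} {xs X Y : List α} (h : pairWith c xs = X ++ a :: Y) :
    (∃ p q, xs = p ++ a :: q ∧ X = pairWith c p ∧ Y = c :: pairWith c q) ∨
      (a = c ∧ ∃ p x q, xs = p ++ x :: q ∧ X = pairWith c p ++ [x] ∧ Y = pairWith c q) := by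
  induction xs generalizing X with
  | nil => simp at h
  | cons x xs ih =>
    rcases X with _ | ⟨y, _ | ⟨z, X⟩⟩
    · simp only [pairWith_cons, nil_append, cons.injEq] at h
      exact .inl ⟨[], xs, by rw [h.1]; rfl, rfl, h.2.symm⟩
    · simp only [pairWith_cons, cons_append, nil_append, cons.injEq] at h
      exact .inr ⟨h.2.1.symm, [], x, xs, rfl, by rw [h.1]; rfl, h.2.2.symm⟩
    · simp only [pairWith_cons, cons_append, cons.injEq] at h
      obtain ⟨rfl, rfl, h⟩ := h
      rcases ih h with ⟨p, q, rfl, rfl, rfl⟩ | ⟨rfl, p, y, q, rfl, rfl, rfl⟩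
      · exact .inl ⟨x :: p, q, rfl, rfl, rfl⟩
      · exact .inr ⟨rfl, x :: p, y, q, rfl, rfl, rfl⟩

theorem MergeFlip.exists_of_pairWith {xs B' : List α} (hc : c ∉ xs)
    (h : MergeFlip (pairWith c xs) B') : ∃ ys, ys ≠ [] ∧ ys ⊆ xs ∧ B' = c :: pairWith c ys := by
  obtain ⟨a, X, Y, hB, rfl⟩ := h
  rcases pairWith_eq_append_cons (X := a :: X) hB with
    ⟨p, q, rfl, hp, rfl⟩ | ⟨rfl, p, x, q, rfl, hp, -⟩
  · refine ⟨p.reverse ++ q, ?_, ?_, ?_⟩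
    · rintro h; simp_all
    · intro y; simp +contextual [or_imp]
    · rw [← reverse_pairWith_append_cons, ← hp]
      simp
  · rcases p with _ | ⟨y, p⟩ <;> simp at hp <;> simp_all

theorem MergeFlip.exists_of_cons_pairWith {xs B' : List α} (hc : c ∉ xs)
    (h : MergeFlip (c :: pairWith c xs) B') : ∃ ys, ys ≠ [] ∧ ys ⊆ xs ∧ B' = pairWith c ys := by
  obtain ⟨a, X, Y, hB, rfl⟩ := h
  obtain ⟨rfl, hB⟩ := cons.inj hB
  rcases pairWith_eq_append_cons hB with ⟨p, q, rfl, -, -⟩ | ⟨-, p, x, q, rfl, rfl, rfl⟩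
  · simp at hc
  · refine ⟨x :: (p.reverse ++ q), by simp, ?_, ?_⟩
    · intro y; simp +contextual [or_imp]
    · simp [reverse_pairWith_append_cons]

end pairWith

theorem GBaseForm.typeIa {j : ℕ} (hj : 2 ≤ j) : GBaseForm (0 :: rep [1, 2] j) :=
  .inl ⟨j, hj, rfl⟩

theorem GBaseForm.typeIb {j : ℕ} (hj : 1 ≤ j) : GBaseForm (0 :: 2 :: rep [1, 2] j) :=
  .inr <| .inl ⟨j, hj, rfl⟩

theorem GBaseForm.typeIIa {xs : List ℕ} (hne : xs ≠ []) (hxs : ∀ x ∈ xs, x = 0 ∨ x = 1) :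
    GBaseForm (pairWith 2 xs) :=
  .inr <| .inr <| .inl ⟨xs, hne, hxs, rfl⟩

theorem GBaseForm.typeIIb {xs : List ℕ} (hne : xs ≠ []) (hxs : ∀ x ∈ xs, x = 0 ∨ x = 1) :
    GBaseForm (2 :: pairWith 2 xs) :=
  .inr <| .inr <| .inr <| .inl ⟨xs, hne, hxs, (flatten_map_cons_pair_append xs).symm⟩

theorem GBaseForm.typeIII {i j : ℕ} (hi : 1 ≤ i) :
    GBaseForm (0 :: (rep [2, 1] i ++ 0 :: 2 :: rep [1, 2] j)) :=
  .inr <| .inr <| .inr <| .inr <| .inl ⟨i, j, hi, rfl⟩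

def typeIVStrings : List (List ℕ) :=
  [[2,1,0,2,1,2], [0,2,1,0,1,2], [0,1,2,0,2,1,2], [1,2,0,1,2,1,2], [0,2,1,0,1,2,1,2],
    [2,0,2,1,0,2,1,2], [0,2,0,2,1,0,2,1,2], [1,2,0,1,2,0,2,1,2]]

theorem GBaseForm.typeIV {s : List ℕ} (hs : s ∈ typeIVStrings) : GBaseForm s := by
  simp only [typeIVStrings, mem_cons, not_mem_nil, or_false] at hs
  exact .inr <| .inr <| .inr <| .inr <| .inr hs

theorem GBaseForm.badTernary {s : List ℕ} (h : GBaseForm s) : BadTernary s :=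
  ⟨id, Set.bijOn_id _, by rwa [map_id]⟩

theorem BadTernary.of_map {s : List ℕ} {f : ℕ → ℕ} (hf : Set.BijOn f {x | x < 3} {x | x < 3})
    (h : BadTernary (s.map f)) : BadTernary s := by
  obtain ⟨g, hg, hs⟩ := h
  exact ⟨g ∘ f, hg.comp hf, by rwa [← map_map]⟩

theorem bijOn_swap_zero_one : Set.BijOn (Equiv.swap 0 1 : ℕ → ℕ) {x | x < 3} {x | x < 3} :=
  Equiv.swap_bijOn_self (by simp)

theorem MergeFlip.eq_of_typeIII {i j : ℕ} {B' : List ℕ}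
    (h : MergeFlip (0 :: (rep [2, 1] i ++ 0 :: 2 :: rep [1, 2] j)) B') :
    B' = rep [1, 2] i ++ 0 :: 2 :: rep [1, 2] j := by
  obtain ⟨a, X, Y, hB, rfl⟩ := h
  obtain ⟨rfl, hB⟩ := cons.inj hB
  obtain ⟨rfl, -, rfl⟩ := (append_cons_inj_of_notMem (by simp [rep]) (by simp [rep])).1 hB
  simp [rep, reverse_flatten]

theorem badTernary_rep_append_zero_two_rep (i j : ℕ) :
    BadTernary (rep [1, 2] i ++ 0 :: 2 :: rep [1, 2] j) := by
  refine ⟨_, bijOn_swap_zero_one, ?_⟩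
  have : (rep [1, 2] i ++ 0 :: 2 :: rep [1, 2] j).map (Equiv.swap 0 1) =
      pairWith 2 (replicate i 0 ++ 1 :: replicate j 0) := by
    simp [rep, pairWith, flatMap_replicate, map_flatten, Equiv.swap_apply_of_ne_of_ne]
  rw [this]
  exact .typeIIa (by simp) (by simp +contextual [or_imp])

theorem badTernary_of_mergeFlip_typeIV {B B' : List ℕ} (hB : B ∈ typeIVStrings)
    (h : MergeFlip B B') : BadTernary B' := by
  obtain ⟨k, hk, hk0, hkB, rfl⟩ := h.exists_take_drop
  simp only [typeIVStrings, mem_cons, not_mem_nil, or_false] at hB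
  rcases hB with rfl | rfl | rfl | rfl | rfl | rfl | rfl | rfl <;> simp at hk <;>
    interval_cases k <;> simp at hkB ⊢
  -- each of the 14 merge results is of type IV, or of type I, II or III up to swapping 0 and 1
  all_goals first
    | exact (GBaseForm.typeIV (by decide)).badTernary
    | exact (GBaseForm.typeIa (j := 2) le_rfl).badTernary
    | exact (GBaseForm.typeIb (j := 2) one_le_two).badTernary
    | exact (GBaseForm.typeIII (i := 1) (j := 1) le_rfl).badTernary
    | exact ⟨_, bijOn_swap_zero_one, GBaseForm.typeIII (i := 1) (j := 0) le_rfl⟩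
    | exact ⟨_, bijOn_swap_zero_one, GBaseForm.typeIII (i := 1) (j := 1) le_rfl⟩
    | exact (GBaseForm.typeIIa (xs := [1, 0, 0, 1]) (by simp) (by simp)).badTernary
    | exact (GBaseForm.typeIIa (xs := [0, 1, 0, 1]) (by simp) (by simp)).badTernary

theorem GBaseForm.badTernary_of_mergeFlip {B B' : List ℕ} (hB : GBaseForm B)
    (h : MergeFlip B B') : BadTernary B' := by
  have h01 {xs : List ℕ} (hxs : ∀ x ∈ xs, x = 0 ∨ x = 1) : 2 ∉ xs := fun h2 => by
    simpa using hxs 2 h2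
  rcases hB with ⟨j, -, rfl⟩ | ⟨j, -, rfl⟩ | ⟨xs, -, hxs, rfl⟩ | ⟨xs, -, hxs, hB⟩ |
    ⟨i, j, -, rfl⟩ | hIV
  · exact absurd h (not_mergeFlip_cons (by simp [rep]))
  · exact absurd h (not_mergeFlip_cons (by simp [rep]))
  · obtain ⟨ys, hys, hsub, rfl⟩ := h.exists_of_pairWith (h01 hxs)
    exact (GBaseForm.typeIIb hys fun y hy => hxs y (hsub hy)).badTernary
  · rw [hB, flatten_map_cons_pair_append] at h
    obtain ⟨ys, hys, hsub, rfl⟩ := h.exists_of_cons_pairWith (h01 hxs)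
    exact (GBaseForm.typeIIa hys fun y hy => hxs y (hsub hy)).badTernary
  · rw [h.eq_of_typeIII]
    exact badTernary_rep_append_zero_two_rep i j
  · exact badTernary_of_mergeFlip_typeIV (by simpa [typeIVStrings] using hIV) h

theorem BadTernary.mergeFlip {B B' : List ℕ} (hB : BadTernary B) (h : MergeFlip B B') :
    BadTernary B' := by
  obtain ⟨f, hf, hfB⟩ := hB
  exact .of_map hf (hfB.badTernary_of_mergeFlip (h.map f))

theorem GBaseForm.not_nodup {B : List ℕ} (hB : GBaseForm B) (hlen : 3 ≤ B.length) :
    ¬ B.Nodup := by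
  rcases hB with ⟨j, hj, rfl⟩ | ⟨j, hj, rfl⟩ | ⟨xs, hne, -, rfl⟩ | ⟨xs, hne, -, rfl⟩ |
    ⟨i, j, -, rfl⟩ | hIV
  · obtain ⟨j, rfl⟩ := Nat.exists_eq_add_of_le' hj
    simp [rep, replicate_succ]
  · obtain ⟨j, rfl⟩ := Nat.exists_eq_add_of_le' hj
    simp [rep, replicate_succ]
  · rcases xs with _ | ⟨x, _ | ⟨y, xs⟩⟩ <;> simp at hlen ⊢
  · rcases xs with _ | ⟨x, xs⟩ <;> simp at hne ⊢
  · simp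
  · rcases hIV with rfl | rfl | rfl | rfl | rfl | rfl | rfl | rfl <;> decide

theorem BadTernary.not_nodup {B : List ℕ} (hB : BadTernary B) (hlen : 3 ≤ B.length)
    (h3 : ∀ x ∈ B, x < 3) : ¬ B.Nodup := by
  obtain ⟨f, hf, hfB⟩ := hB
  exact fun hnd => hfB.not_nodup (by simpa)
    (hnd.map_on fun x hx y hy => hf.injOn (h3 x hx) (h3 y hy))

theorem length_destutter_le_of_reachIn_grouped {m : ℕ} {s g : List ℕ} (hsg : ReachIn m s g)
    (hg : Grouped g) (hs : ∀ x ∈ s, x < 3) (hbad : BadTernary (s.destutter (· ≠ ·))) :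
    (s.destutter (· ≠ ·)).length ≤ m + 2 := by
  induction m generalizing s with
  | zero =>
    obtain rfl : s = g := hsg
    by_contra! hlen
    exact hbad.not_nodup hlen (fun x hx => hs x (mem_destutter_ne.1 hx)) hg.nodup_destutter
  | succ m ih =>
    obtain ⟨u, hsu, hug⟩ := hsg
    have hu : ∀ x ∈ u, x < 3 := fun x hx => hs x (hsu.perm.mem_iff.2 hx)
    have := length_destutter_le_of_flipStep hsu
    by_cases hlt : (u.destutter (· ≠ ·)).length < (s.destutter (· ≠ ·)).length
    · have := ih hug hu (hbad.mergeFlip (hsu.mergeFlip_destutter hlt))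
      omega
    · have := length_destutter_le_of_reachIn hug
      have := hg.length_destutter_le fun x hx => hu x (hug.perm.mem_iff.2 hx)
      omega

theorem grouping_bad_ternary (n : ℕ) (s : List ℕ)
    (hlen : s.length = n) (hfull : FullyKary 3 s) (hnorm : Normalized s)
    (hbad : BadTernary s) :
    groupDist s = n - 2 := by
  have hs : ∀ x ∈ s, x < 3 := fun x hx => (hfull x).1 hx
  have hblocks : s.destutter (· ≠ ·) = s := destutter_of_isChain _ _ hnorm
  obtain ⟨m, t, hst, ht, hm⟩ := exists_reachIn_grouped s
  rw [hblocks, hlen] at hm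
  have hmem : m ∈ {k | ∃ t, Grouped t ∧ ReachIn k s t} := ⟨t, ht, hst⟩
  refine le_antisymm ((Nat.sInf_le hmem).trans hm) (le_csInf ⟨m, hmem⟩ ?_)
  rintro k ⟨g, hg, hsg⟩
  have := length_destutter_le_of_reachIn_grouped hsg hg hs (by rwa [hblocks])
  rw [hblocks, hlen] at this
  omega
end

section
/- For every normalized fully ternary string s whose last symbol is 0 or 1, the flip sorting distance of s equals the flip sorting distance of the string s2 obtained by appending the symbol 2 to the end of s: d_s(s2) = d_s(s). -/
/-!
Follow the appended `2` through a shortest flip sequence from `s ++ [2]` to `I(s) ++ [2]` and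
delete it everywhere. Each flip of the longer string becomes a flip of the shorter one, or
disappears when it flipped the tracked symbol alone, and since `I(s) ++ [2]` is sorted, deleting
any `2` from it leaves `I(s)`. Hence `d_s(s) ≤ d_s(s ++ [2])`; conversely, flips of `s` act on
`s ++ [2]` without moving the last symbol.
-/

theorem length_pflip (i : ℕ) (s : List ℕ) : (pflip i s).length = s.length := by
  simp only [pflip, List.length_append, List.length_reverse, List.length_take, List.length_drop]
  omega

theorem pflip_zero (s : List ℕ) : pflip 0 s = s := by
  simp [pflip]

theorem pflip_append_of_length_eq {i : ℕ} {l : List ℕ} (h : l.length = i) (r : List ℕ) :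
    pflip i (l ++ r) = l.reverse ++ r := by
  subst h
  simp [pflip]

theorem pflip_append_of_le_length {i : ℕ} {s : List ℕ} (hi : i ≤ s.length) (r : List ℕ) :
    pflip i (s ++ r) = pflip i s ++ r := by
  simp only [pflip, List.take_append_of_le_length hi, List.drop_append_of_le_length hi,
    List.append_assoc]

theorem List.eraseIdx_reverse {α : Type*} (l : List α) {p : ℕ} (hp : p < l.length) :
    l.reverse.eraseIdx (l.length - 1 - p) = (l.eraseIdx p).reverse := by
  apply List.ext_getElem (by simp [List.length_eraseIdx, hp]; omega)
  intro j h₁ h₂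
  have hlen : (l.eraseIdx p).length = l.length - 1 := by simp [List.length_eraseIdx, hp]
  simp only [List.getElem_eraseIdx, List.getElem_reverse]
  rw [List.length_reverse, hlen] at h₂
  split <;> split <;> (congr 1; omega)

/-- The position to which the flip `f^(i)` moves the symbol at position `p`. -/
def flipIndex (i p : ℕ) : ℕ := if p < i then i - 1 - p else p

section FlipIndex

variable {i p : ℕ} {s : List ℕ}

theorem flipIndex_lt_length (hi : i ≤ s.length) (hp : p < s.length) :
    flipIndex i p < (pflip i s).length := by
  rw [length_pflip, flipIndex]
  split <;> omega

theorem getElem_pflip_flipIndex (hi : i ≤ s.length) (hp : p < s.length) :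
    (pflip i s)[flipIndex i p]'(flipIndex_lt_length hi hp) = s[p] := by
  obtain ⟨A, B, rfl, rfl⟩ : ∃ A B, s = A ++ B ∧ A.length = i :=
    ⟨s.take i, s.drop i, (List.take_append_drop i s).symm, List.length_take_of_le hi⟩
  simp only [pflip_append_of_length_eq rfl, flipIndex, List.getElem_append, List.getElem_reverse,
    List.length_reverse]
  split_ifs <;> first | rfl | omega | (congr 1; omega)

theorem eraseIdx_pflip_flipIndex (hi : i ≤ s.length) (hp : p < s.length) :
    (pflip i s).eraseIdx (flipIndex i p) = pflip (if p < i then i - 1 else i) (s.eraseIdx p) := by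
  obtain ⟨A, B, rfl, rfl⟩ : ∃ A B, s = A ++ B ∧ A.length = i :=
    ⟨s.take i, s.drop i, (List.take_append_drop i s).symm, List.length_take_of_le hi⟩
  rw [pflip_append_of_length_eq rfl, flipIndex]
  split
  · rw [List.eraseIdx_append_of_lt_length (by simp; omega), List.eraseIdx_reverse _ ‹_›,
      List.eraseIdx_append_of_lt_length ‹_›, pflip_append_of_length_eq]
    simp [List.length_eraseIdx, ‹p < A.length›]
  · rw [List.eraseIdx_append_of_length_le (by simp; omega),
      List.eraseIdx_append_of_length_le (by omega), pflip_append_of_length_eq rfl,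
      List.length_reverse]

end FlipIndex

namespace ReachIn

theorem append_right_s13 {m : ℕ} {s t : List ℕ} (h : ReachIn m s t) (r : List ℕ) :
    ReachIn m (s ++ r) (t ++ r) := by
  induction m generalizing s with
  | zero => exact congrArg (· ++ r) h
  | succ m ih =>
    obtain ⟨u, ⟨i, hi₁, hi₂, rfl⟩, hu⟩ := h
    exact ⟨pflip i s ++ r, ⟨i, hi₁, by simp; omega, (pflip_append_of_le_length hi₂ r).symm⟩,
      ih hu⟩

/-- Deleting a tracked symbol turns the flip `f^(i)` into `f^(i-1)` or `f^(i)`; the case `f^(0)`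
(a flip of that symbol alone) is dropped, so at most `m` flips remain. -/
theorem eraseIdx {m : ℕ} {u v : List ℕ} (h : ReachIn m u v) {p : ℕ} (hp : p < u.length) :
    ∃ q, ∃ hq : q < v.length, v[q] = u[p] ∧
      ∃ m' ≤ m, ReachIn m' (u.eraseIdx p) (v.eraseIdx q) := by
  induction m generalizing u p with
  | zero =>
    obtain rfl : u = v := h
    exact ⟨p, hp, rfl, 0, le_rfl, rfl⟩
  | succ m ih =>
    obtain ⟨w, ⟨i, hi₁, hi₂, rfl⟩, hw⟩ := h
    obtain ⟨q, hq, hval, m', hm', hr⟩ := ih hw (flipIndex_lt_length hi₂ hp)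
    refine ⟨q, hq, hval.trans (getElem_pflip_flipIndex hi₂ hp), ?_⟩
    rw [eraseIdx_pflip_flipIndex hi₂ hp] at hr
    set j := if p < i then i - 1 else i with hj
    have hlen : (u.eraseIdx p).length = u.length - 1 := by simp [List.length_eraseIdx, hp]
    by_cases hj0 : j = 0
    · rw [hj0, pflip_zero] at hr
      exact ⟨m', by omega, hr⟩
    · exact ⟨m' + 1, by omega, _, ⟨j, by omega, by rw [hlen, hj]; split <;> omega, rfl⟩, hr⟩

end ReachIn

theorem List.eraseIdx_append_singleton_of_pairwise {α : Type*} [PartialOrder α] {t : List α}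
    {b : α} (ht : (t ++ [b]).Pairwise (· ≤ ·)) {q : ℕ} (hq : q < (t ++ [b]).length)
    (hb : (t ++ [b])[q] = b) : (t ++ [b]).eraseIdx q = t := by
  refine List.Perm.eq_of_pairwise' (ht.sublist (List.eraseIdx_sublist _ _))
    (List.pairwise_append.1 ht).1 ?_
  have := List.getElem_cons_eraseIdx_perm hq
  rw [hb] at this
  exact (List.perm_cons _).1 (this.trans (List.perm_append_singleton _ _))

theorem List.insertionSort_append_singleton {α : Type*} [LinearOrder α] {s : List α} {b : α}
    (hb : ∀ a ∈ s, a ≤ b) :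
    (s ++ [b]).insertionSort (· ≤ ·) = s.insertionSort (· ≤ ·) ++ [b] := by
  refine List.Perm.eq_of_pairwise' (List.pairwise_insertionSort _ _) ?_ ?_
  · exact List.pairwise_append.2 ⟨List.pairwise_insertionSort _ _, List.pairwise_singleton _ _,
      fun a ha _ hb' => (List.mem_singleton.1 hb') ▸ hb a ((List.mem_insertionSort _).1 ha)⟩
  · exact (List.perm_insertionSort _ _).trans
      ((List.perm_insertionSort _ _).symm.append (List.Perm.refl _))

theorem Nat.sInf_eq_of_subset_of_exists_le {A B : Set ℕ} (hBA : B ⊆ A)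
    (hAB : ∀ m ∈ A, ∃ m' ≤ m, m' ∈ B) : sInf A = sInf B := by
  rcases B.eq_empty_or_nonempty with rfl | hB
  · rw [Set.eq_empty_of_forall_notMem (s := A) fun m hm => by simpa using hAB m hm]
  obtain ⟨m', hm', hm'B⟩ := hAB _ (Nat.sInf_mem (hB.mono hBA))
  exact le_antisymm (Nat.sInf_le (hBA (Nat.sInf_mem hB))) ((Nat.sInf_le hm'B).trans hm')

theorem flipDist_append_singleton {s t : List ℕ} {b : ℕ} (ht : (t ++ [b]).Pairwise (· ≤ ·)) :
    flipDist (s ++ [b]) (t ++ [b]) = flipDist s t := by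
  refine Nat.sInf_eq_of_subset_of_exists_le (fun m h => ReachIn.append_right_s13 h [b]) ?_
  intro m h
  obtain ⟨q, hq, hval, m', hm', hr⟩ := h.eraseIdx (p := s.length) (by simp)
  rw [List.eraseIdx_append_singleton_of_pairwise ht hq (by simpa using hval),
    List.eraseIdx_append_of_length_le le_rfl, Nat.sub_self] at hr
  exact ⟨m', hm', by simpa using hr⟩

theorem sorting_append_two_general (s : List ℕ)
    (hfull : FullyKary 3 s) :
    sortDist (s ++ [2]) = sortDist s := by
  have hsort : (s ++ [2]).insertionSort (· ≤ ·) = s.insertionSort (· ≤ ·) ++ [2] :=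
    List.insertionSort_append_singleton fun a ha => Nat.le_of_lt_succ ((hfull a).1 ha)
  unfold sortDist
  rw [hsort]
  exact flipDist_append_singleton (hsort ▸ List.pairwise_insertionSort _ _)

theorem sorting_append_two (s : List ℕ)
    (hfull : FullyKary 3 s) (hnorm : Normalized s)
    (hlast : s.getLast? = some 0 ∨ s.getLast? = some 1) :
    sortDist (s ++ [2]) = sortDist s :=
  sorting_append_two_general s hfull
end
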